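/- Let φ(t,s) = (√(f(t)+g(t)s) + √(h(t)s))² with f, g, h smooth, f > 0, h > 0, and suppose φ satisfies the weakly Kähler equation on an open set of (t,s) with 0 < s < t. Then the coefficient condition t·f·h·(t f′ − f − 2t g) = 0 holds, hence g(t) = (t f′(t) − f(t))/(2t) for all t > 0. -/

import Mathlib

open Real

/-- Partial derivative in the second variable `s`. -/
noncomputable def dS (F : ℝ → ℝ → ℝ) (t s : ℝ) : ℝ := deriv (F t) s

/-- Partial derivative in the first variable `t`. -/
noncomputable def dT (F : ℝ → ℝ → ℝ) (t s : ℝ) : ℝ := deriv (fun u => F u s) t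

/-- `U = (sφ + s(t−s)φ_s)/φ`. -/
noncomputable def Uf (φ : ℝ → ℝ → ℝ) (t s : ℝ) : ℝ :=
  (s * φ t s + s * (t - s) * dS φ t s) / φ t s

/-- `W = (φ_t + φ_s)/φ`. -/
noncomputable def Wf (φ : ℝ → ℝ → ℝ) (t s : ℝ) : ℝ :=
  (dT φ t s + dS φ t s) / φ t s

/-- The region `0 < s < t` (with `p = (t, s)`). -/
def Reg : Set (ℝ × ℝ) := {p | 0 < p.2 ∧ p.2 < p.1}

/-- Left-hand side of the weakly Kähler equation. -/
noncomputable def WK (φ : ℝ → ℝ → ℝ) (t s : ℝ) : ℝ :=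
  (φ t s - s * dS φ t s) * (φ t s + (t - s) * dS φ t s) *
    (dS φ t s - dT φ t s + s * (dT (dS φ) t s + dS (dS φ) t s)) +
  s * (t - s) * dS (dS φ) t s *
    (φ t s * (dS φ t s - dT φ t s) + s * dS φ t s * (dT φ t s + dS φ t s))

set_option maxHeartbeats 1000000 in
noncomputable def Qp (a b s H t G fp gp hp : ℝ) : ℝ :=
    2*b*s^3*t*G^2*fp*H^2 +
    (-4)*b*s^3*t*G^3*H^2 +
    6*b*s^4*G^3*H^2 +
    2*b*s^4*t*G^2*gp*H^2 +
    (-2)*b*s^4*t*G^3*hp*H +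
    2*b*s^5*G^3*hp*H +
    (-4)*a*s^3*t*G^2*H^3 +
    10*a*s^3*t*G^2*fp*H^2 +
    (-16)*a*s^3*t*G^3*H^2 +
    4*a*s^4*G^2*H^3 +
    (-4)*a*s^4*G^2*fp*H^2 +
    22*a*s^4*G^3*H^2 +
    6*a*s^4*t*G^2*gp*H^2 +
    (-6)*a*s^4*t*G^3*hp*H +
    6*a*s^5*G^3*hp*H +
    (-12)*a^2*b*s^2*t*G^2*H^2 +
    18*a^2*b*s^2*t*G^2*fp*H +
    (-24)*a^2*b*s^2*t*G^3*H +
    2*a^2*b*s^3*G^2*H^2 +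
    (-12)*a^2*b*s^3*G^2*fp*H +
    30*a^2*b*s^3*G^3*H +
    (-4)*a^2*b*s^3*t*G*gp*H^2 +
    4*a^2*b*s^3*t*G^2*hp*H +
    6*a^2*b*s^3*t*G^2*gp*H +
    (-6)*a^2*b*s^3*t*G^3*hp +
    (-6)*a^2*b*s^4*G^2*hp*H +
    6*a^2*b*s^4*G^3*hp +
    4*a^3*s^2*t*G*H^3 +
    (-4)*a^3*s^2*t*G*fp*H^2 +
    (-8)*a^3*s^2*t*G^2*H^2 +
    14*a^3*s^2*t*G^2*fp*H +
    (-16)*a^3*s^2*t*G^3*H +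
    (-8)*a^3*s^3*G*H^3 +
    8*a^3*s^3*G*fp*H^2 +
    (-26)*a^3*s^3*G^2*H^2 +
    (-12)*a^3*s^3*G^2*fp*H +
    18*a^3*s^3*G^3*H +
    (-12)*a^3*s^3*t*G*gp*H^2 +
    12*a^3*s^3*t*G^2*hp*H +
    2*a^3*s^3*t*G^2*gp*H +
    (-2)*a^3*s^3*t*G^3*hp +
    (-18)*a^3*s^4*G^2*hp*H +
    2*a^3*s^4*G^3*hp +
    (-2)*a^4*b*s*t*fp*H^2 +
    16*a^4*b*s*t*G*H^2 +
    (-12)*a^4*b*s*t*G*fp*H +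
    8*a^4*b*s*t*G^2*H +
    4*a^4*b*s*t*G^2*fp +
    (-4)*a^4*b*s*t*G^3 +
    (-22)*a^4*b*s^2*G*H^2 +
    24*a^4*b*s^2*G*fp*H +
    (-50)*a^4*b*s^2*G^2*H +
    (-4)*a^4*b*s^2*G^2*fp +
    4*a^4*b*s^2*G^3 +
    2*a^4*b*s^2*t*gp*H^2 +
    (-2)*a^4*b*s^2*t*G*hp*H +
    (-12)*a^4*b*s^2*t*G*gp*H +
    12*a^4*b*s^2*t*G^2*hp +
    6*a^4*b*s^3*G*hp*H +
    (-18)*a^4*b*s^3*G^2*hp +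
    (-6)*a^5*s*t*fp*H^2 +
    24*a^5*s*t*G*H^2 +
    (-12)*a^5*s*t*G*fp*H +
    12*a^5*s*t*G^2*H +
    4*a^5*s^2*H^3 +
    (-4)*a^5*s^2*fp*H^2 +
    (-14)*a^5*s^2*G*H^2 +
    24*a^5*s^2*G*fp*H +
    (-34)*a^5*s^2*G^2*H +
    6*a^5*s^2*t*gp*H^2 +
    (-6)*a^5*s^2*t*G*hp*H +
    (-4)*a^5*s^2*t*G*gp*H +
    4*a^5*s^2*t*G^2*hp +
    18*a^5*s^3*G*hp*H +
    (-6)*a^5*s^3*G^2*hp +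
    (-6)*a^6*b*t*fp*H +
    16*a^6*b*t*G*H +
    (-4)*a^6*b*t*G*fp +
    4*a^6*b*t*G^2 +
    14*a^6*b*s*H^2 +
    (-12)*a^6*b*s*fp*H +
    10*a^6*b*s*G*H +
    8*a^6*b*s*G*fp +
    (-8)*a^6*b*s*G^2 +
    6*a^6*b*s*t*gp*H +
    (-6)*a^6*b*s*t*G*hp +
    (-2)*a^6*b*s^2*hp*H +
    18*a^6*b*s^2*G*hp +
    (-2)*a^7*t*fp*H +
    4*a^7*t*G*H +
    18*a^7*s*H^2 +
    (-12)*a^7*s*fp*H +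
    14*a^7*s*G*H +
    2*a^7*s*t*gp*H +
    (-2)*a^7*s*t*G*hp +
    (-6)*a^7*s^2*hp*H +
    6*a^7*s^2*G*hp +
    10*a^8*b*H +
    (-4)*a^8*b*fp +
    4*a^8*b*G +
    (-6)*a^8*b*s*hp +
    2*a^9*H +
    (-2)*a^9*s*hp

lemma sqrtD {F : ℝ → ℝ} {F' x : ℝ} (hF : HasDerivAt F F' x) (hx : F x ≠ 0) :
    HasDerivAt (fun y => Real.sqrt (F y)) (F' / (2 * Real.sqrt (F x))) x := by
  have h := (Real.hasDerivAt_sqrt hx).comp x hF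
  refine h.congr_deriv ?_
  ring

lemma linD (c d x : ℝ) : HasDerivAt (fun y : ℝ => c + d * y) d x := by
  simpa using ((hasDerivAt_id x).const_mul d).const_add c

lemma mulD (d x : ℝ) : HasDerivAt (fun y : ℝ => d * y) d x := by
  simpa using (hasDerivAt_id x).const_mul d

set_option maxHeartbeats 4000000 in
lemma bridge (φ : ℝ → ℝ → ℝ) (t s A B H G fp gp hp : ℝ)
    (hA : A ≠ 0) (hB : B ≠ 0) (hs : s ≠ 0)
    (hphi : φ t s = (A+B)^2)
    (E1 : A*s*dS φ t s = B*s*G + A*s*G + A*B^2 + A^2*B)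
    (E2 : A*B*dT φ t s = B^2*fp + B^2*s*gp + A*B*fp + A*B*s*hp + A*B*s*gp + A^2*s*hp)
    (E3 : 2*A^3*s^2*dS (dS φ) t s = (-1)*B*s^2*G^2 + 2*A^2*B*s*G + (-1)*A^4*B)
    (E4 : 2*A^3*B*s*dT (dS φ) t s = (-1)*B^2*s*G*fp + (-1)*B^2*s^2*G*gp + A^2*s^2*G*hp
      + A^2*B^2*fp + 3*A^2*B^2*s*gp + 2*A^3*B*s*hp + 2*A^3*B*s*gp + A^4*s*hp)
    (E5 : B^2 = H*s)
    (h0 : WK φ t s = 0) :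
    Qp A B s H t G fp gp hp = 0 := by
  unfold WK at h0
  rw [hphi] at h0
  have key : 4*A^10*B^2*s^7 * Qp A B s H t G fp gp hp = 0 := by
    unfold Qp
    linear_combination (16*A^14*B^3*s^7) * h0
      - ((-16)*A^11*B^5*s^7*t*G^2 + 16*A^11*B^5*s^8*G^2 + (-32)*A^12*B^4*s^7*t*G^2 + 32*A^12*B^4*s^8*G^2 + (-16)*A^12*B^6*s^6*t*G + (-16)*A^13*B^3*s^7*t*G^2 + 16*A^13*B^3*s^8*G^2 + (-16)*A^13*B^5*s^6*t*G + (-32)*A^13*B^5*s^7*G + 16*A^14*B^4*s^6*t*G + (-64)*A^14*B^4*s^7*G + 16*A^14*B^6*s^5*t + 16*A^15*B^3*s^6*t*G + (-32)*A^15*B^3*s^7*G + 32*A^15*B^5*s^5*t + 16*A^15*B^5*s^6 + 16*A^16*B^4*s^5*t + 32*A^16*B^4*s^6 + 16*A^17*B^3*s^6 + (-16)*(dT (dS φ) t s)*A^12*B^4*s^8*t*G + 16*(dT (dS φ) t s)*A^12*B^4*s^9*G + (-16)*(dT (dS φ) t s)*A^13*B^3*s^8*t*G + 16*(dT (dS φ)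 t s)*A^13*B^3*s^9*G + (-16)*(dT (dS φ) t s)*A^13*B^5*s^8 + 16*(dT (dS φ) t s)*A^14*B^4*s^7*t + (-48)*(dT (dS φ) t s)*A^14*B^4*s^8 + 16*(dT (dS φ) t s)*A^15*B^3*s^7*t + (-32)*(dT (dS φ) t s)*A^15*B^3*s^8 + 32*(dS (dS φ) t s)*A^13*B^5*s^7*t + (-48)*(dS (dS φ) t s)*A^13*B^5*s^8 + 64*(dS (dS φ) t s)*A^14*B^4*s^7*t + (-96)*(dS (dS φ) t s)*A^14*B^4*s^8 + 32*(dS (dS φ) t s)*A^15*B^3*s^7*t + (-48)*(dS (dS φ) t s)*A^15*B^3*s^8 + 16*(dT φ t s)*A^12*B^4*s^7*t*G + (-16)*(dT φ t s)*A^12*B^4*s^8*G + 16*(dT φ t s)*A^13*B^3*s^7*t*G + (-16)*(dT φ t s)*A^13*B^3*s^8*G + 16*(dT φ t s)*A^13*B^5*s^7 + (-16)*(dT φ t s)*A^14*B^4*s^6*t + 48*(dT φ t s)*A^14*B^4*s^7 + (-16)*(dT φ t s)*A^15*B^3*s^6*t + 32*(dT φ t s)*A^15*B^3*s^7 + 16*(dT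 φ t s)*(dS (dS φ) t s)*A^13*B^3*s^8*t + (-16)*(dT φ t s)*(dS (dS φ) t s)*A^13*B^3*s^9 + (-16)*(dS φ t s)*A^12*B^4*s^7*t*G + 16*(dS φ t s)*A^12*B^4*s^8*G + (-16)*(dS φ t s)*A^13*B^3*s^7*t*G + 16*(dS φ t s)*A^13*B^3*s^8*G + (-16)*(dS φ t s)*A^13*B^5*s^7 + 16*(dS φ t s)*A^14*B^4*s^6*t + (-48)*(dS φ t s)*A^14*B^4*s^7 + 16*(dS φ t s)*A^15*B^3*s^6*t + (-32)*(dS φ t s)*A^15*B^3*s^7 + (-16)*(dS φ t s)*(dT (dS φ) t s)*A^13*B^3*s^8*t + 16*(dS φ t s)*(dT (dS φ) t s)*A^13*B^3*s^9 + 16*(dS φ t s)*(dT φ t s)*A^13*B^3*s^7*t + (-16)*(dS φ t s)*(dT φ t s)*A^13*B^3*s^8 + (-16)*(dS φ t s)^2*A^13*B^3*s^7*t + 16*(dS φ t s)^2*A^13*B^3*s^8) * E1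
      - (16*A^11*B^4*s^8*t*G^2 + (-16)*A^11*B^4*s^9*G^2 + 32*A^12*B^3*s^8*t*G^2 + (-32)*A^12*B^3*s^9*G^2 + 16*A^12*B^5*s^7*t*G + 16*A^13*B^2*s^8*t*G^2 + (-16)*A^13*B^2*s^9*G^2 + 16*A^13*B^4*s^7*t*G + 32*A^13*B^4*s^8*G + (-16)*A^14*B^3*s^7*t*G + 64*A^14*B^3*s^8*G + (-16)*A^14*B^5*s^6*t + (-16)*A^15*B^2*s^7*t*G + 32*A^15*B^2*s^8*G + (-32)*A^15*B^4*s^6*t + (-16)*A^15*B^4*s^7 + (-16)*A^16*B^3*s^6*t + (-32)*A^16*B^3*s^7 + (-16)*A^17*B^2*s^7 + 16*(dS (dS φ) t s)*A^12*B^3*s^9*t*G + (-16)*(dS (dS φ) t s)*A^12*B^3*s^10*G + 16*(dS (dS φ) t s)*A^13*B^2*s^9*t*G + (-16)*(dS (dS φ) t s)*A^13*B^2*s^10*G + (-16)*(dS (dS φ) t s)*A^14*B^3*s^8*t + 16*(dS (dS φ) t s)*A^14*B^3*s^9 + (-16)*(dS (dS φ) t s)*A^15*B^2*s^8*t + 16*(dS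 (dS φ) t s)*A^15*B^2*s^9) * E2
      - (8*A^9*B^5*s^7*t*G*fp + (-8)*A^9*B^5*s^8*G*fp + 8*A^9*B^5*s^8*t*G*gp + (-8)*A^9*B^5*s^9*G*gp + 16*A^10*B^4*s^7*t*G*fp + (-16)*A^10*B^4*s^8*G*fp + 8*A^10*B^4*s^8*t*G*hp + 16*A^10*B^4*s^8*t*G*gp + (-8)*A^10*B^4*s^9*G*hp + (-16)*A^10*B^4*s^9*G*gp + 16*A^10*B^6*s^6*t*G + (-24)*A^10*B^6*s^7*G + 8*A^11*B^3*s^7*t*G*fp + (-8)*A^11*B^3*s^8*G*fp + 16*A^11*B^3*s^8*t*G*hp + 8*A^11*B^3*s^8*t*G*gp + (-16)*A^11*B^3*s^9*G*hp + (-8)*A^11*B^3*s^9*G*gp + (-8)*A^11*B^5*s^6*t*fp + 48*A^11*B^5*s^6*t*G + 8*A^11*B^5*s^7*fp + (-72)*A^11*B^5*s^7*G + (-8)*A^11*B^5*s^7*t*gp + 8*A^11*B^5*s^8*gp + 16*A^11*B^7*s^5*t + (-16)*A^11*B^7*s^6 + 8*A^12*B^2*s^8*t*G*hp + (-8)*A^12*B^2*s^9*G*hp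 + (-16)*A^12*B^4*s^6*t*fp + 48*A^12*B^4*s^6*t*G + 16*A^12*B^4*s^7*fp + (-72)*A^12*B^4*s^7*G + (-8)*A^12*B^4*s^7*t*hp + (-16)*A^12*B^4*s^7*t*gp + 8*A^12*B^4*s^8*hp + 16*A^12*B^4*s^8*gp + 48*A^12*B^6*s^5*t + (-40)*A^12*B^6*s^6 + (-8)*A^13*B^3*s^6*t*fp + 16*A^13*B^3*s^6*t*G + 8*A^13*B^3*s^7*fp + (-24)*A^13*B^3*s^7*G + (-16)*A^13*B^3*s^7*t*hp + (-8)*A^13*B^3*s^7*t*gp + 16*A^13*B^3*s^8*hp + 8*A^13*B^3*s^8*gp + 48*A^13*B^5*s^5*t + (-24)*A^13*B^5*s^6 + (-8)*A^14*B^2*s^7*t*hp + 8*A^14*B^2*s^8*hp + 16*A^14*B^4*s^5*t + 8*A^14*B^4*s^6 + 8*A^15*B^3*s^6) * E3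
      - ((-8)*A^9*B^4*s^8*t*G^2 + 8*A^9*B^4*s^9*G^2 + (-16)*A^10*B^3*s^8*t*G^2 + 16*A^10*B^3*s^9*G^2 + (-8)*A^10*B^5*s^7*t*G + (-8)*A^11*B^2*s^8*t*G^2 + 8*A^11*B^2*s^9*G^2 + (-8)*A^11*B^4*s^7*t*G + (-16)*A^11*B^4*s^8*G + 8*A^12*B^3*s^7*t*G + (-32)*A^12*B^3*s^8*G + 8*A^12*B^5*s^6*t + 8*A^13*B^2*s^7*t*G + (-16)*A^13*B^2*s^8*G + 16*A^13*B^4*s^6*t + 8*A^13*B^4*s^7 + 8*A^14*B^3*s^6*t + 16*A^14*B^3*s^7 + 8*A^15*B^2*s^7) * E4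
      - (8*A^10*B^3*s^9*t*G^2*fp*H + (-16)*A^10*B^3*s^9*t*G^3*H + 24*A^10*B^3*s^10*G^3*H + 8*A^10*B^3*s^10*t*G^2*gp*H + (-8)*A^10*B^3*s^10*t*G^3*hp + 8*A^10*B^3*s^11*G^3*hp + 8*A^10*B^5*s^8*t*G^2*fp + (-16)*A^10*B^5*s^8*t*G^3 + 24*A^10*B^5*s^9*G^3 + 8*A^10*B^5*s^9*t*G^2*gp + (-16)*A^11*B^2*s^9*t*G^2*H^2 + 40*A^11*B^2*s^9*t*G^2*fp*H + (-64)*A^11*B^2*s^9*t*G^3*H + 16*A^11*B^2*s^10*G^2*H^2 + (-16)*A^11*B^2*s^10*G^2*fp*H + 88*A^11*B^2*s^10*G^3*H + 24*A^11*B^2*s^10*t*G^2*gp*H + (-24)*A^11*B^2*s^10*t*G^3*hp + 24*A^11*B^2*s^11*G^3*hp + (-16)*A^11*B^4*s^8*t*G^2*H + 40*A^11*B^4*s^8*t*G^2*fp + (-64)*A^11*B^4*s^8*t*G^3 + 16*A^11*B^4*s^9*G^2*H + (-16)*A^11*B^4*s^9*G^2*fp + 88*A^11*B^4*s^9*G^3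 + 24*A^11*B^4*s^9*t*G^2*gp + (-16)*A^11*B^6*s^7*t*G^2 + 16*A^11*B^6*s^8*G^2 + (-48)*A^12*B^3*s^8*t*G^2*H + 72*A^12*B^3*s^8*t*G^2*fp + (-96)*A^12*B^3*s^8*t*G^3 + 8*A^12*B^3*s^9*G^2*H + (-48)*A^12*B^3*s^9*G^2*fp + 120*A^12*B^3*s^9*G^3 + (-16)*A^12*B^3*s^9*t*G*gp*H + 16*A^12*B^3*s^9*t*G^2*hp + 24*A^12*B^3*s^9*t*G^2*gp + (-24)*A^12*B^3*s^10*G^2*hp + (-48)*A^12*B^5*s^7*t*G^2 + 8*A^12*B^5*s^8*G^2 + (-16)*A^12*B^5*s^8*t*G*gp + 16*A^13*B^2*s^8*t*G*H^2 + (-16)*A^13*B^2*s^8*t*G*fp*H + (-32)*A^13*B^2*s^8*t*G^2*H + 56*A^13*B^2*s^8*t*G^2*fp + (-64)*A^13*B^2*s^8*t*G^3 + (-32)*A^13*B^2*s^9*G*H^2 + 32*A^13*B^2*s^9*G*fp*H + (-104)*A^13*B^2*s^9*G^2*H + (-48)*A^13*B^2*s^9*G^2*fp + 72*A^13*B^2*s^9*G^3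 + (-48)*A^13*B^2*s^9*t*G*gp*H + 48*A^13*B^2*s^9*t*G^2*hp + 8*A^13*B^2*s^9*t*G^2*gp + (-72)*A^13*B^2*s^10*G^2*hp + 16*A^13*B^4*s^7*t*G*H + (-16)*A^13*B^4*s^7*t*G*fp + (-32)*A^13*B^4*s^7*t*G^2 + (-32)*A^13*B^4*s^8*G*H + 32*A^13*B^4*s^8*G*fp + (-104)*A^13*B^4*s^8*G^2 + (-48)*A^13*B^4*s^8*t*G*gp + 16*A^13*B^6*s^6*t*G + (-32)*A^13*B^6*s^7*G + (-8)*A^14*B^3*s^7*t*fp*H + 64*A^14*B^3*s^7*t*G*H + (-48)*A^14*B^3*s^7*t*G*fp + 32*A^14*B^3*s^7*t*G^2 + (-88)*A^14*B^3*s^8*G*H + 96*A^14*B^3*s^8*G*fp + (-200)*A^14*B^3*s^8*G^2 + 8*A^14*B^3*s^8*t*gp*H + (-8)*A^14*B^3*s^8*t*G*hp + (-48)*A^14*B^3*s^8*t*G*gp + 24*A^14*B^3*s^9*G*hp + (-8)*A^14*B^5*s^6*t*fp + 64*A^14*B^5*s^6*t*G + (-88)*A^14*B^5*s^7*G + 8*A^14*B^5*s^7*t*gp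 + (-24)*A^15*B^2*s^7*t*fp*H + 96*A^15*B^2*s^7*t*G*H + (-48)*A^15*B^2*s^7*t*G*fp + 48*A^15*B^2*s^7*t*G^2 + 16*A^15*B^2*s^8*H^2 + (-16)*A^15*B^2*s^8*fp*H + (-56)*A^15*B^2*s^8*G*H + 96*A^15*B^2*s^8*G*fp + (-136)*A^15*B^2*s^8*G^2 + 24*A^15*B^2*s^8*t*gp*H + (-24)*A^15*B^2*s^8*t*G*hp + (-16)*A^15*B^2*s^8*t*G*gp + 72*A^15*B^2*s^9*G*hp + (-24)*A^15*B^4*s^6*t*fp + 96*A^15*B^4*s^6*t*G + 16*A^15*B^4*s^7*H + (-16)*A^15*B^4*s^7*fp + (-56)*A^15*B^4*s^7*G + 24*A^15*B^4*s^7*t*gp + 16*A^15*B^6*s^6 + (-24)*A^16*B^3*s^6*t*fp + 64*A^16*B^3*s^6*t*G + 56*A^16*B^3*s^7*H + (-48)*A^16*B^3*s^7*fp + 40*A^16*B^3*s^7*G + 24*A^16*B^3*s^7*t*gp + (-8)*A^16*B^3*s^8*hp + 56*A^16*B^5*s^6 + (-8)*A^17*B^2*s^6*t*fp + 16*A^17*B^2*s^6*t*G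 + 72*A^17*B^2*s^7*H + (-48)*A^17*B^2*s^7*fp + 56*A^17*B^2*s^7*G + 8*A^17*B^2*s^7*t*gp + (-24)*A^17*B^2*s^8*hp + 72*A^17*B^4*s^6 + 40*A^18*B^3*s^6 + 8*A^19*B^2*s^6) * E5
  rcases mul_eq_zero.mp key with hk | hk
  · exact absurd hk (by simp [hA, hB, hs, pow_eq_zero_iff, sub_eq_zero])
  · exact hk

lemma keylem (f g h : ℝ → ℝ) (φ : ℝ → ℝ → ℝ) (t s : ℝ)
    (hs : 0 < s) (hst : s < t)
    (hfd : HasDerivAt f (deriv f t) t) (hgd : HasDerivAt g (deriv g t) t)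
    (hhd : HasDerivAt h (deriv h t) t)
    (hhpos : ∀ u : ℝ, 0 < u → 0 < h u)
    (hwd : ∀ u y : ℝ, 0 < y → y < u → 0 < f u + g u * y)
    (hφ : ∀ u y : ℝ, φ u y = (Real.sqrt (f u + g u * y) + Real.sqrt (h u * y)) ^ 2)
    (h0 : WK φ t s = 0) :
    Qp (Real.sqrt (f t + g t * s)) (Real.sqrt (h t * s)) s (h t) t (g t)
      (deriv f t) (deriv g t) (deriv h t) = 0 := by
  have ht : 0 < t := hs.trans hst
  -- generic dS formula
  have dS_eq : ∀ u y : ℝ, 0 < y → y < u →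
      dS φ u y = 2*(Real.sqrt (f u + g u*y) + Real.sqrt (h u*y)) *
        (g u/(2*Real.sqrt (f u + g u*y)) + h u/(2*Real.sqrt (h u*y))) := by
    intro u y hy hyu
    have hu : 0 < u := hy.trans hyu
    have h1 : 0 < f u + g u * y := hwd u y hy hyu
    have h2 : 0 < h u * y := mul_pos (hhpos u hu) hy
    have hA : HasDerivAt (fun z => Real.sqrt (f u + g u * z))
        (g u / (2*Real.sqrt (f u + g u*y))) y := sqrtD (linD (f u) (g u) y) h1.ne'
    have hB : HasDerivAt (fun z => Real.sqrt (h u * z))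
        (h u / (2*Real.sqrt (h u*y))) y := sqrtD (mulD (h u) y) h2.ne'
    have h3 : HasDerivAt (φ u)
        (2*(Real.sqrt (f u + g u*y) + Real.sqrt (h u*y)) *
          (g u/(2*Real.sqrt (f u + g u*y)) + h u/(2*Real.sqrt (h u*y)))) y := by
      have hfun : φ u = fun z => (Real.sqrt (f u + g u*z) + Real.sqrt (h u*z))^2 :=
        funext fun z => hφ u z
      rw [hfun]
      have h4 := (hA.add hB).pow 2
      refine h4.congr_deriv ?_
      simp only [Pi.add_apply]
      push_cast
      ring
    simp only [dS]
    exact h3.deriv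
  set A := Real.sqrt (f t + g t * s) with hAdef
  set B := Real.sqrt (h t * s) with hBdef
  have h1 : 0 < f t + g t * s := hwd t s hs hst
  have h2 : 0 < h t * s := mul_pos (hhpos t ht) hs
  have hA0 : 0 < A := Real.sqrt_pos.mpr h1
  have hB0 : 0 < B := Real.sqrt_pos.mpr h2
  have hB2 : B^2 = h t * s := Real.sq_sqrt h2.le
  have hHd : h t = B^2/s := by rw [hB2]; field_simp
  have hphi : φ t s = (A+B)^2 := hφ t s
  -- E1
  have e1 : dS φ t s = 2*(A+B)*(g t/(2*A) + h t/(2*B)) := dS_eq t s hs hst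
  have E1 : A*s*dS φ t s = B*s*(g t) + A*s*(g t) + A*B^2 + A^2*B := by
    rw [e1, hHd]
    field_simp
    ring
  -- E2
  have hP : HasDerivAt (fun u => f u + g u * s) (deriv f t + deriv g t * s) t :=
    hfd.add (hgd.mul_const s)
  have hAt : HasDerivAt (fun u => Real.sqrt (f u + g u*s))
      ((deriv f t + deriv g t*s)/(2*A)) t := sqrtD hP h1.ne'
  have hBt : HasDerivAt (fun u => Real.sqrt (h u*s)) ((deriv h t*s)/(2*B)) t :=
    sqrtD (hhd.mul_const s) h2.ne'
  have e2 : dT φ t s = 2*(A+B)*((deriv f t + deriv g t*s)/(2*A) + (deriv h t*s)/(2*B)) := by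
    have hfun : (fun u => φ u s) = fun u => (Real.sqrt (f u + g u*s) + Real.sqrt (h u*s))^2 :=
      funext fun u => hφ u s
    simp only [dT]
    rw [hfun]
    have h4 := ((hAt.add hBt).pow 2).deriv
    rw [show (fun u => (√(f u + g u * s) + √(h u * s)) ^ 2) = ((fun u => √(f u + g u * s)) + fun u => √(h u * s)) ^ 2 from rfl, h4]
    simp only [Pi.add_apply]
    push_cast
    ring
  have E2 : A*B*dT φ t s = B^2*(deriv f t) + B^2*s*(deriv g t) + A*B*(deriv f t)
      + A*B*s*(deriv h t) + A*B*s*(deriv g t) + A^2*s*(deriv h t) := by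
    rw [e2]
    field_simp
    ring
  -- E3
  have hAs : HasDerivAt (fun y => Real.sqrt (f t + g t*y)) ((g t)/(2*A)) s :=
    sqrtD (linD (f t) (g t) s) h1.ne'
  have hBs : HasDerivAt (fun y => Real.sqrt (h t*y)) ((h t)/(2*B)) s :=
    sqrtD (mulD (h t) s) h2.ne'
  have hD1 : HasDerivAt (fun y => g t/(2*Real.sqrt (f t + g t*y)))
      ((0*(2*A) - g t*(2*((g t)/(2*A))))/(2*A)^2) s :=
    (hasDerivAt_const s (g t)).div (hAs.const_mul 2) (by positivity)
  have hD2 : HasDerivAt (fun y => h t/(2*Real.sqrt (h t*y)))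
      ((0*(2*B) - h t*(2*((h t)/(2*B))))/(2*B)^2) s :=
    (hasDerivAt_const s (h t)).div (hBs.const_mul 2) (by positivity)
  have hS : HasDerivAt (fun y => 2*(Real.sqrt (f t + g t*y) + Real.sqrt (h t*y)) *
        (g t/(2*Real.sqrt (f t + g t*y)) + h t/(2*Real.sqrt (h t*y))))
      ((2*((g t)/(2*A) + (h t)/(2*B))) * (g t/(2*A) + h t/(2*B))
        + (2*(A+B)) * ((0*(2*A) - g t*(2*((g t)/(2*A))))/(2*A)^2
            + (0*(2*B) - h t*(2*((h t)/(2*B))))/(2*B)^2)) s :=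
    ((hAs.add hBs).const_mul 2).mul (hD1.add hD2)
  have e3 : dS (dS φ) t s = (2*((g t)/(2*A) + (h t)/(2*B))) * (g t/(2*A) + h t/(2*B))
        + (2*(A+B)) * ((0*(2*A) - g t*(2*((g t)/(2*A))))/(2*A)^2
            + (0*(2*B) - h t*(2*((h t)/(2*B))))/(2*B)^2) := by
    have hev : (fun y => dS φ t y) =ᶠ[nhds s]
        (fun y => 2*(Real.sqrt (f t + g t*y) + Real.sqrt (h t*y)) *
          (g t/(2*Real.sqrt (f t + g t*y)) + h t/(2*Real.sqrt (h t*y)))) :=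
      Filter.eventually_of_mem (Ioo_mem_nhds hs hst) (fun y hy => dS_eq t y hy.1 hy.2)
    have : dS (dS φ) t s = deriv (fun y => dS φ t y) s := rfl
    rw [this, hev.deriv_eq]
    exact hS.deriv
  have E3 : 2*A^3*s^2*dS (dS φ) t s = (-1)*B*s^2*(g t)^2 + 2*A^2*B*s*(g t) + (-1)*A^4*B := by
    rw [e3, hHd]
    field_simp
    ring
  -- E4
  have hD3 : HasDerivAt (fun u => g u/(2*Real.sqrt (f u + g u*s)))
      ((deriv g t*(2*A) - g t*(2*((deriv f t + deriv g t*s)/(2*A))))/(2*A)^2) t :=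
    hgd.div (hAt.const_mul 2) (by positivity)
  have hD4 : HasDerivAt (fun u => h u/(2*Real.sqrt (h u*s)))
      ((deriv h t*(2*B) - h t*(2*((deriv h t*s)/(2*B))))/(2*B)^2) t :=
    hhd.div (hBt.const_mul 2) (by positivity)
  have hT : HasDerivAt (fun u => 2*(Real.sqrt (f u + g u*s) + Real.sqrt (h u*s)) *
        (g u/(2*Real.sqrt (f u + g u*s)) + h u/(2*Real.sqrt (h u*s))))
      ((2*((deriv f t + deriv g t*s)/(2*A) + (deriv h t*s)/(2*B))) * (g t/(2*A) + h t/(2*B))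
        + (2*(A+B)) * ((deriv g t*(2*A) - g t*(2*((deriv f t + deriv g t*s)/(2*A))))/(2*A)^2
            + (deriv h t*(2*B) - h t*(2*((deriv h t*s)/(2*B))))/(2*B)^2)) t :=
    ((hAt.add hBt).const_mul 2).mul (hD3.add hD4)
  have e4 : dT (dS φ) t s =
      (2*((deriv f t + deriv g t*s)/(2*A) + (deriv h t*s)/(2*B))) * (g t/(2*A) + h t/(2*B))
        + (2*(A+B)) * ((deriv g t*(2*A) - g t*(2*((deriv f t + deriv g t*s)/(2*A))))/(2*A)^2
            + (deriv h t*(2*B) - h t*(2*((deriv h t*s)/(2*B))))/(2*B)^2) := by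
    have hev : (fun u => dS φ u s) =ᶠ[nhds t]
        (fun u => 2*(Real.sqrt (f u + g u*s) + Real.sqrt (h u*s)) *
          (g u/(2*Real.sqrt (f u + g u*s)) + h u/(2*Real.sqrt (h u*s)))) :=
      Filter.eventually_of_mem (Ioi_mem_nhds hst) (fun u hu => dS_eq u s hs hu)
    have : dT (dS φ) t s = deriv (fun u => dS φ u s) t := rfl
    rw [this, hev.deriv_eq]
    exact hT.deriv
  have E4 : 2*A^3*B*s*dT (dS φ) t s = (-1)*B^2*s*(g t)*(deriv f t)
      + (-1)*B^2*s^2*(g t)*(deriv g t) + A^2*s^2*(g t)*(deriv h t)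
      + A^2*B^2*(deriv f t) + 3*A^2*B^2*s*(deriv g t) + 2*A^3*B*s*(deriv h t)
      + 2*A^3*B*s*(deriv g t) + A^4*s*(deriv h t) := by
    rw [e4, hHd]
    field_simp
    ring
  exact bridge φ t s A B (h t) (g t) (deriv f t) (deriv g t) (deriv h t)
    hA0.ne' hB0.ne' hs.ne' hphi E1 E2 E3 E4 hB2 h0

theorem stmt7 (f g h : ℝ → ℝ)
    (hf : ContDiffOn ℝ (⊤ : ℕ∞) f (Set.Ioi 0))
    (hg : ContDiffOn ℝ (⊤ : ℕ∞) g (Set.Ioi 0))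
    (hh : ContDiffOn ℝ (⊤ : ℕ∞) h (Set.Ioi 0))
    (hfpos : ∀ t : ℝ, 0 < t → 0 < f t)
    (hhpos : ∀ t : ℝ, 0 < t → 0 < h t)
    (φ : ℝ → ℝ → ℝ)
    (hφ : ∀ t s : ℝ, φ t s =
      (Real.sqrt (f t + g t * s) + Real.sqrt (h t * s)) ^ 2)
    (hwd : ∀ t s : ℝ, 0 < s → s < t → 0 < f t + g t * s)
    (hWK : ∀ t s : ℝ, 0 < s → s < t → WK φ t s = 0) :
    ∀ t : ℝ, 0 < t →
      t * f t * h t * (t * deriv f t - f t - 2 * t * g t) = 0 ∧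
      g t = (t * deriv f t - f t) / (2 * t) := by
  intro t ht
  have hto : Set.Ioi (0:ℝ) ∈ nhds t := Ioi_mem_nhds ht
  have hfd : HasDerivAt f (deriv f t) t :=
    ((hf.differentiableOn (by simp)).differentiableAt hto).hasDerivAt
  have hgd : HasDerivAt g (deriv g t) t :=
    ((hg.differentiableOn (by simp)).differentiableAt hto).hasDerivAt
  have hhd : HasDerivAt h (deriv h t) t :=
    ((hh.differentiableOn (by simp)).differentiableAt hto).hasDerivAt
  have key : ∀ s : ℝ, 0 < s → s < t →
      Qp (Real.sqrt (f t + g t * s)) (Real.sqrt (h t * s)) s (h t) t (g t)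
        (deriv f t) (deriv g t) (deriv h t) = 0 := fun s hs hst =>
    keylem f g h φ t s hs hst hfd hgd hhd hhpos hwd hφ (hWK t s hs hst)
  -- limit as s → 0⁺
  set Fn : ℝ → ℝ := fun y => Qp (Real.sqrt (f t + g t * y)) (Real.sqrt (h t * y)) y (h t) t
    (g t) (deriv f t) (deriv g t) (deriv h t) with hFndef
  have hc1 : Continuous (fun y : ℝ => Real.sqrt (f t + g t * y)) :=
    Real.continuous_sqrt.comp (continuous_const.add (continuous_const.mul continuous_id))
  have hc2 : Continuous (fun y : ℝ => Real.sqrt (h t * y)) :=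
    Real.continuous_sqrt.comp (continuous_const.mul continuous_id)
  have hFn : Continuous Fn := by
    rw [hFndef]
    unfold Qp
    fun_prop
  have hmem : Set.Ioo (0:ℝ) t ∈ nhdsWithin (0:ℝ) (Set.Ioi 0) :=
    Ioo_mem_nhdsGT_of_mem ⟨le_refl 0, ht⟩
  have hlim1 : Filter.Tendsto Fn (nhdsWithin (0:ℝ) (Set.Ioi 0)) (nhds (Fn 0)) :=
    (hFn.tendsto 0).mono_left nhdsWithin_le_nhds
  have heq : Fn =ᶠ[nhdsWithin (0:ℝ) (Set.Ioi 0)] fun _ => 0 :=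
    Filter.eventually_of_mem hmem (fun y hy => key y hy.1 hy.2)
  have hlim2 : Filter.Tendsto Fn (nhdsWithin (0:ℝ) (Set.Ioi 0)) (nhds 0) :=
    (Filter.tendsto_congr' heq).mpr tendsto_const_nhds
  have hFn0 : Fn 0 = 0 := tendsto_nhds_unique hlim1 hlim2
  rw [hFndef] at hFn0
  simp only [mul_zero, add_zero, Real.sqrt_zero] at hFn0
  have hfin : (Real.sqrt (f t))^7 * (h t) *
      ((Real.sqrt (f t))^2 + 2*t*(g t) - t*(deriv f t)) = 0 := by
    unfold Qp at hFn0
    linear_combination (1/2) * hFn0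
  have hc : 0 < Real.sqrt (f t) := Real.sqrt_pos.mpr (hfpos t ht)
  have h7 : 0 < (Real.sqrt (f t))^7 * h t := mul_pos (pow_pos hc 7) (hhpos t ht)
  have hEz : (Real.sqrt (f t))^2 + 2*t*(g t) - t*(deriv f t) = 0 :=
    (mul_eq_zero.mp hfin).resolve_left h7.ne'
  rw [Real.sq_sqrt (hfpos t ht).le] at hEz
  have hE : t*(deriv f t) - f t - 2*t*(g t) = 0 := by linarith
  constructor
  · rw [hE, mul_zero]
  · have ht2 : (2*t) ≠ 0 := ne_of_gt (by linarith)
    field_simp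
    linarith
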